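/- Let Λ be a k-graph with topological realization X_Λ. For each m ≤ 1_k and λ ∈ Λ^m, the closure of Q_λ in X_Λ equals {[λ,t] : 0 ≤ t ≤ m}. Moreover, defining X_Λ^0 = ⋃_{v ∈ Λ^0} Q_v and recursively X_Λ^{r+1} = X_Λ^r ∪ ⋃ {Q_λ : d(λ) ≤ 1_k, |d(λ)| = r+1}, a subset U of X_Λ is open if and only if U ∩ X_Λ^r is relatively open in X_Λ^r for each r ≤ k. -/

import Mathlib

/-- A `k`-graph: a countable small category (objects identified with the
identity morphisms, i.e. the morphisms of degree `0`) equipped with a degree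
functor `d : Λ → ℕᵏ` satisfying the unique factorization property. -/
structure KGraph (k : ℕ) where
  /-- The morphisms of the category. -/
  Mor : Type
  /-- The category is countable. -/
  countable : Countable Mor
  /-- The source (domain) of a morphism, viewed as a degree-zero morphism. -/
  src : Mor → Mor
  /-- The range (codomain) of a morphism, viewed as a degree-zero morphism. -/
  rng : Mor → Mor
  /-- Composition `comp a b = a ∘ b`, meaningful when `src a = rng b`. -/
  comp : Mor → Mor → Mor
  /-- The degree functor. -/
  deg : Mor → Fin k → ℕ
  src_src : ∀ a, src (src a) = src a
  rng_src : ∀ a, rng (src a) = src a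
  src_rng : ∀ a, src (rng a) = rng a
  rng_rng : ∀ a, rng (rng a) = rng a
  deg_src : ∀ a, deg (src a) = 0
  deg_rng : ∀ a, deg (rng a) = 0
  src_comp : ∀ a b, src a = rng b → src (comp a b) = src b
  rng_comp : ∀ a b, src a = rng b → rng (comp a b) = rng a
  comp_assoc : ∀ a b c, src a = rng b → src b = rng c →
    comp (comp a b) c = comp a (comp b c)
  id_comp : ∀ a, comp (rng a) a = a
  comp_id : ∀ a, comp a (src a) = a
  deg_comp : ∀ a b, src a = rng b → deg (comp a b) = deg a + deg b
  /-- The unique factorization property. -/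
  factor : ∀ (a : Mor) (m n : Fin k → ℕ), deg a = m + n →
    ∃! p : Mor × Mor, deg p.1 = m ∧ deg p.2 = n ∧ src p.1 = rng p.2 ∧
      comp p.1 p.2 = a

namespace KGraph

variable {k : ℕ} (Λ : KGraph k)

/-- The segment `a(m,n)` of a morphism `a`, i.e. the (unique) middle factor of
`a = a(0,m) a(m,n) a(n, d(a))`; junk value `a` if no such factorization exists. -/
noncomputable def seg (a : Λ.Mor) (m n : Fin k → ℕ) : Λ.Mor :=
  letI := Classical.propDecidable
  if h : ∃ b : Λ.Mor, Λ.deg b = n - m ∧ ∃ x y : Λ.Mor,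
      Λ.deg x = m ∧ Λ.src x = Λ.rng b ∧ Λ.src b = Λ.rng y ∧
      a = Λ.comp x (Λ.comp b y)
  then h.choose else a

/-- The points `⨆_{λ ∈ Λ} {λ} × [0, d(λ)]` of which the topological
realization is a quotient; topologized as a disjoint union of subspaces of `ℝᵏ`. -/
def Points : Type :=
  Σ a : Λ.Mor, { t : Fin k → ℝ // ∀ i, 0 ≤ t i ∧ t i ≤ (Λ.deg a i : ℝ) }

instance : TopologicalSpace Λ.Points :=
  inferInstanceAs (TopologicalSpace
    (Σ a : Λ.Mor, { t : Fin k → ℝ // ∀ i, 0 ≤ t i ∧ t i ≤ (Λ.deg a i : ℝ) }))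

/-- Coordinatewise floor `⌊t⌋` (as a vector of naturals; this is the honest
floor on the relevant region `t ≥ 0`). -/
noncomputable def fl (t : Fin k → ℝ) : Fin k → ℕ := fun i => (⌊t i⌋).toNat

/-- Coordinatewise ceiling `⌈t⌉`. -/
noncomputable def ce (t : Fin k → ℝ) : Fin k → ℕ := fun i => (⌈t i⌉).toNat

/-- The fractional part `t - ⌊t⌋`. -/
noncomputable def frac (t : Fin k → ℝ) : Fin k → ℝ := fun i => t i - ((⌊t i⌋).toNat : ℝ)

/-- The relation `(μ,s) ∼ (ν,t) ⟺ μ(⌊s⌋,⌈s⌉) = ν(⌊t⌋,⌈t⌉)` and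
`s - ⌊s⌋ = t - ⌊t⌋` defining the topological realization. -/
def ptRel : Λ.Points → Λ.Points → Prop := fun p q =>
  Λ.seg p.1 (fl p.2.1) (ce p.2.1) = Λ.seg q.1 (fl q.2.1) (ce q.2.1) ∧
    frac p.2.1 = frac q.2.1

/-- `ptRel` is an equivalence relation. -/
def ptSetoid : Setoid Λ.Points where
  r := Λ.ptRel
  iseqv := ⟨fun _ => ⟨rfl, rfl⟩, fun h => ⟨h.1.symm, h.2.symm⟩,
    fun h h' => ⟨h.1.trans h'.1, h.2.trans h'.2⟩⟩

/-- The topological realization `X_Λ` of the `k`-graph `Λ`. -/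
def Real : Type := Quotient Λ.ptSetoid

instance : TopologicalSpace Λ.Real :=
  inferInstanceAs (TopologicalSpace (Quotient Λ.ptSetoid))

/-- The class `[λ, t] ∈ X_Λ` of a pair `(λ, t)` with `0 ≤ t ≤ d(λ)`. -/
def pt (a : Λ.Mor) (t : Fin k → ℝ) (h : ∀ i, 0 ≤ t i ∧ t i ≤ (Λ.deg a i : ℝ)) :
    Λ.Real :=
  Quotient.mk Λ.ptSetoid ⟨a, ⟨t, h⟩⟩

/-- The open cube `Q_λ = {[λ,t] : t ∈ (0, d(λ))}` of a morphism `λ` (of degree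
`≤ (1,…,1)`). -/
def Qcube (lam : Λ.Mor) : Set Λ.Real :=
  { x | ∃ (t : Fin k → ℝ) (h : ∀ i, 0 ≤ t i ∧ t i ≤ (Λ.deg lam i : ℝ)),
      (∀ i, Λ.deg lam i = 1 → 0 < t i ∧ t i < 1) ∧ x = Λ.pt lam t h }

/-- The `r`-skeleton `X_Λ^r` of the topological realization. -/
def skel' (G : KGraph k) : ℕ → Set G.Real
  | 0 => ⋃ v ∈ { v : G.Mor | G.deg v = 0 }, G.Qcube v
  | (r+1) => skel' G r ∪
      ⋃ lam ∈ { lam : G.Mor | G.deg lam ≤ 1 ∧ ∑ i, G.deg lam i = r + 1 },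
        G.Qcube lam

/-- The `r`-skeleton (wrapper). -/
def skel (r : ℕ) : Set Λ.Real := skel' Λ r

/-- A `k`-graph is connected if any two vertices are joined by an undirected
path of morphisms. -/
def Connected : Prop :=
  ∀ u v : Λ.Mor, Λ.deg u = 0 → Λ.deg v = 0 →
    Relation.ReflTransGen (fun x y => ∃ e : Λ.Mor,
      (Λ.src e = x ∧ Λ.rng e = y) ∨ (Λ.src e = y ∧ Λ.rng e = x)) u v

end KGraph

/-- A morphism of `k`-graphs: a degree-preserving functor. -/
@[ext]
structure KGraphHom {k : ℕ} (Λ Γ : KGraph k) where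
  toFun : Λ.Mor → Γ.Mor
  map_src : ∀ a, toFun (Λ.src a) = Γ.src (toFun a)
  map_rng : ∀ a, toFun (Λ.rng a) = Γ.rng (toFun a)
  map_comp : ∀ a b, Λ.src a = Λ.rng b →
    toFun (Λ.comp a b) = Γ.comp (toFun a) (toFun b)
  map_deg : ∀ a, Γ.deg (toFun a) = Λ.deg a

namespace KGraphHom

variable {k : ℕ} {Λ Γ Θ : KGraph k}

/-- The identity `k`-graph morphism. -/
def id (Λ : KGraph k) : KGraphHom Λ Λ :=
  ⟨fun a => a, fun _ => rfl, fun _ => rfl, fun _ _ _ => rfl, fun _ => rfl⟩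

/-- Composition of `k`-graph morphisms. -/
def comp (ψ : KGraphHom Γ Θ) (φ : KGraphHom Λ Γ) : KGraphHom Λ Θ where
  toFun := ψ.toFun ∘ φ.toFun
  map_src a := by simp [Function.comp, φ.map_src, ψ.map_src]
  map_rng a := by simp [Function.comp, φ.map_rng, ψ.map_rng]
  map_comp a b h := by
    simp only [Function.comp]
    rw [φ.map_comp a b h, ψ.map_comp _ _ (by rw [← φ.map_src, ← φ.map_rng, h])]
  map_deg a := by simp [Function.comp, φ.map_deg, ψ.map_deg]

/-- The induced map on points `(λ, t) ↦ (φ(λ), t)`. -/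
def pointMap (φ : KGraphHom Λ Γ) : Λ.Points → Γ.Points :=
  fun p => ⟨φ.toFun p.1, ⟨p.2.1, fun i => by rw [φ.map_deg]; exact p.2.2 i⟩⟩

/-- The induced map `φ̃ : X_Λ → X_Γ` on topological realizations,
`φ̃([λ,t]) = [φ(λ), t]` (defined via choice of representatives). -/
noncomputable def real (φ : KGraphHom Λ Γ) : Λ.Real → Γ.Real :=
  fun x => Quotient.mk Γ.ptSetoid (φ.pointMap (Quotient.out x))

end KGraphHom

/-- A covering of `k`-graphs: a surjective degree-preserving functor
`p : Ω → Λ` mapping `Ωv` bijectively onto `Λp(v)` and `vΩ` bijectively onto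
`p(v)Λ` for every vertex `v` of `Ω`. -/
def KGraphHom.IsCovering {k : ℕ} {Ω Λ : KGraph k} (p : KGraphHom Ω Λ) : Prop :=
  Function.Surjective p.toFun ∧
    ∀ v : Ω.Mor, Ω.deg v = 0 →
      Set.BijOn p.toFun { a | Ω.src a = v } { b | Λ.src b = p.toFun v } ∧
      Set.BijOn p.toFun { a | Ω.rng a = v } { b | Λ.rng b = p.toFun v }

/-!
Every point `[a,t]` equals `[a(⌊t⌋,⌈t⌉), t - ⌊t⌋]`, a point of the open cube of a morphism of
degree `≤ 1_k`; hence the skeleton `X_Λ^k` is all of `X_Λ`, which gives the weak-topology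
statement. Since `t ↦ [λ,t]` is continuous on `[0, d(λ)]` and the open face is dense there, the
closed cube lies in the closure of `Q_λ`. Conversely the closed cube is closed: by
`[a,t] = [a(m,n), t - m]` for `m ≤ t ≤ n`, its preimage in the cell of any `a` is the finite
union of those faces `[m,n]` of `[0, d(a)]` for which `a(m,n)` is also a segment of `λ`.
-/

lemma mem_closure_openFace {k : ℕ} {d : Fin k → ℕ} {t : Fin k → ℝ}
    (ht : ∀ i, 0 ≤ t i ∧ t i ≤ d i) :
    t ∈ closure {u : Fin k → ℝ | ∀ i, (0 ≤ u i ∧ u i ≤ d i) ∧ (d i = 1 → 0 < u i ∧ u i < 1)} := by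
  have hpi : Set.univ.pi (fun i => if d i = 1 then Set.Ioo 0 1 else Set.Icc 0 (d i : ℝ)) ⊆
      {u | ∀ i, (0 ≤ u i ∧ u i ≤ d i) ∧ (d i = 1 → 0 < u i ∧ u i < 1)} := by
    intro u hu i
    have hui := hu i (Set.mem_univ i)
    dsimp only at hui
    split_ifs at hui with hi
    · rw [hi, Nat.cast_one]
      exact ⟨⟨hui.1.le, hui.2.le⟩, fun _ => hui⟩
    · exact ⟨hui, fun h => absurd h hi⟩
  refine closure_mono hpi ?_
  rw [closure_pi_set]
  intro i _
  dsimp only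
  split_ifs with hi
  · rw [closure_Ioo zero_ne_one]
    simpa [hi] using ht i
  · rw [closure_Icc]
    exact ht i

namespace KGraph

variable {k : ℕ} {Λ : KGraph k}

def IsSeg (Λ : KGraph k) (a : Λ.Mor) (m n : Fin k → ℕ) (b : Λ.Mor) : Prop :=
  Λ.deg b = n - m ∧ ∃ x y : Λ.Mor,
    Λ.deg x = m ∧ Λ.src x = Λ.rng b ∧ Λ.src b = Λ.rng y ∧
    a = Λ.comp x (Λ.comp b y)

lemma IsSeg.unique {a b b' : Λ.Mor} {m n : Fin k → ℕ}
    (h : Λ.IsSeg a m n b) (h' : Λ.IsSeg a m n b') : b = b' := by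
  obtain ⟨hb, x, y, hx, hxb, hby, ha⟩ := h
  obtain ⟨hb', x', y', hx', hxb', hby', ha'⟩ := h'
  have deg_a : Λ.deg a = m + ((n - m) + Λ.deg y) := by
    rw [ha, Λ.deg_comp _ _ (by rwa [Λ.rng_comp _ _ hby]), Λ.deg_comp _ _ hby, hx, hb]
  have deg_a' : Λ.deg a = m + ((n - m) + Λ.deg y') := by
    rw [ha', Λ.deg_comp _ _ (by rwa [Λ.rng_comp _ _ hby']), Λ.deg_comp _ _ hby', hx', hb']
  have hy : Λ.deg y = Λ.deg y' := add_left_cancel (add_left_cancel (deg_a.symm.trans deg_a'))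
  have hby_eq : Λ.comp b y = Λ.comp b' y' := congrArg Prod.snd <|
    (Λ.factor a m _ deg_a).unique (y₁ := (x, Λ.comp b y)) (y₂ := (x', Λ.comp b' y'))
      ⟨hx, by rw [Λ.deg_comp _ _ hby, hb], by rwa [Λ.rng_comp _ _ hby], ha.symm⟩
      ⟨hx', by rw [Λ.deg_comp _ _ hby', hb', hy], by rwa [Λ.rng_comp _ _ hby'], ha'.symm⟩
  exact congrArg Prod.fst <|
    (Λ.factor (Λ.comp b y) (n - m) (Λ.deg y) (by rw [Λ.deg_comp _ _ hby, hb])).unique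
      (y₁ := (b, y)) (y₂ := (b', y'))
      ⟨hb, rfl, hby, rfl⟩ ⟨hb', hy.symm, hby', hby_eq.symm⟩

lemma IsSeg.trans {a b c : Λ.Mor} {m n m' n' : Fin k → ℕ} (hmn : m' ≤ n')
    (hb : Λ.IsSeg a m n b) (hc : Λ.IsSeg b m' n' c) : Λ.IsSeg a (m + m') (m + n') c := by
  obtain ⟨-, x, y, hx, hxb, hby, ha⟩ := hb
  obtain ⟨hc, u, w, hu, huc, hcw, hb⟩ := hc
  have hucw : Λ.src u = Λ.rng (Λ.comp c w) := by rwa [Λ.rng_comp _ _ hcw]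
  have hxu : Λ.src x = Λ.rng u := by rw [hxb, hb, Λ.rng_comp _ _ hucw]
  have hwy : Λ.src w = Λ.rng y := by rw [← hby, hb, Λ.src_comp _ _ hucw, Λ.src_comp _ _ hcw]
  have hcwy : Λ.src c = Λ.rng (Λ.comp w y) := by rwa [Λ.rng_comp _ _ hwy]
  refine ⟨?_, Λ.comp x u, Λ.comp w y, ?_, ?_, hcwy, ?_⟩
  · ext i
    have h : m' i ≤ n' i := hmn i
    simp only [hc, Pi.sub_apply, Pi.add_apply]
    omega
  · rw [Λ.deg_comp _ _ hxu, hx, hu]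
  · rwa [Λ.src_comp _ _ hxu]
  · rw [ha, hb, Λ.comp_assoc _ _ _ hucw (by rwa [Λ.src_comp _ _ hcw]), Λ.comp_assoc _ _ _ hcw hwy,
      Λ.comp_assoc _ _ _ hxu (by rwa [Λ.rng_comp _ _ hcwy])]

lemma IsSeg.seg_eq {a b : Λ.Mor} {m n : Fin k → ℕ} (hb : Λ.IsSeg a m n b) :
    Λ.seg a m n = b := by
  classical
  have h : ∃ b, Λ.IsSeg a m n b := ⟨b, hb⟩
  rw [seg]
  exact (dif_pos h).trans (h.choose_spec.unique hb)

lemma exists_isSeg {a : Λ.Mor} {m n : Fin k → ℕ} (hmn : m ≤ n) (hna : n ≤ Λ.deg a) :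
    ∃ b, Λ.IsSeg a m n b := by
  have hm : m + (Λ.deg a - m) = Λ.deg a := add_tsub_cancel_of_le (hmn.trans hna)
  obtain ⟨⟨x, c⟩, ⟨hx, hc, hxc, hxc_a⟩, -⟩ := Λ.factor a m (Λ.deg a - m) hm.symm
  have hn : (n - m) + (Λ.deg a - n) = Λ.deg a - m := by
    ext i
    have h₁ : m i ≤ n i := hmn i
    have h₂ : n i ≤ Λ.deg a i := hna i
    simp only [Pi.sub_apply, Pi.add_apply]
    omega
  obtain ⟨⟨b, y⟩, ⟨hb, -, hby, hby_c⟩, -⟩ := Λ.factor c (n - m) (Λ.deg a - n) (hc.trans hn.symm)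
  refine ⟨b, hb, x, y, hx, ?_, hby, ?_⟩
  · rwa [← hby_c, Λ.rng_comp _ _ hby] at hxc
  · rw [← hxc_a, hby_c]

lemma isSeg_seg {a : Λ.Mor} {m n : Fin k → ℕ} (hmn : m ≤ n) (hna : n ≤ Λ.deg a) :
    Λ.IsSeg a m n (Λ.seg a m n) := by
  obtain ⟨b, hb⟩ := exists_isSeg hmn hna
  rwa [hb.seg_eq]

lemma deg_seg {a : Λ.Mor} {m n : Fin k → ℕ} (hmn : m ≤ n) (hna : n ≤ Λ.deg a) :
    Λ.deg (Λ.seg a m n) = n - m :=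
  (isSeg_seg hmn hna).1

lemma seg_seg {a : Λ.Mor} {m m' n' n : Fin k → ℕ}
    (hm : m ≤ m') (hmn : m' ≤ n') (hn : n' ≤ n) (hna : n ≤ Λ.deg a) :
    Λ.seg (Λ.seg a m n) (m' - m) (n' - m) = Λ.seg a m' n' := by
  have hsub : m' - m ≤ n' - m := tsub_le_tsub_right hmn m
  have hb := isSeg_seg (hm.trans (hmn.trans hn)) hna
  have hc := isSeg_seg hsub (by rw [hb.1]; exact tsub_le_tsub_right hn m)
  have := (hb.trans hsub hc).seg_eq
  rw [add_tsub_cancel_of_le hm, add_tsub_cancel_of_le (hm.trans hmn)] at this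
  exact this.symm

lemma fl_apply (t : Fin k → ℝ) (i : Fin k) : fl t i = ⌊t i⌋₊ := Int.floor_toNat _

lemma ce_apply (t : Fin k → ℝ) (i : Fin k) : ce t i = ⌈t i⌉₊ := Int.ceil_toNat _

lemma frac_apply (t : Fin k → ℝ) (i : Fin k) : frac t i = t i - ⌊t i⌋₊ := by
  rw [frac, ← fl, fl_apply]

lemma fl_le_ce (t : Fin k → ℝ) : fl t ≤ ce t := fun i => by
  rw [fl_apply, ce_apply]; exact Nat.floor_le_ceil _

lemma ce_le {t : Fin k → ℝ} {n : Fin k → ℕ} (h : ∀ i, t i ≤ n i) : ce t ≤ n := fun i => by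
  rw [ce_apply]; exact Nat.ceil_le.2 (h i)

lemma le_fl {t : Fin k → ℝ} {m : Fin k → ℕ} (h : ∀ i, (m i : ℝ) ≤ t i) : m ≤ fl t := fun i => by
  rw [fl_apply]; exact Nat.le_floor (h i)

lemma natCast_fl_le {t : Fin k → ℝ} (ht : ∀ i, 0 ≤ t i) (i : Fin k) : (fl t i : ℝ) ≤ t i := by
  rw [fl_apply]; exact Nat.floor_le (ht i)

lemma le_natCast_ce (t : Fin k → ℝ) (i : Fin k) : t i ≤ ce t i := by
  rw [ce_apply]; exact Nat.le_ceil (t i)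

lemma fl_sub_natCast (t : Fin k → ℝ) (m : Fin k → ℕ) :
    fl (fun i => t i - m i) = fl t - m := by
  ext i; simp only [fl_apply, Pi.sub_apply, Nat.floor_sub_natCast]

lemma ce_sub_natCast (t : Fin k → ℝ) (m : Fin k → ℕ) :
    ce (fun i => t i - m i) = ce t - m := by
  ext i; simp only [ce_apply, Pi.sub_apply, Nat.ceil_sub_natCast]

lemma frac_sub_natCast {t : Fin k → ℝ} {m : Fin k → ℕ} (h : ∀ i, (m i : ℝ) ≤ t i) :
    frac (fun i => t i - m i) = frac t := by
  ext i
  rw [frac_apply, frac_apply, Nat.floor_sub_natCast, Nat.cast_sub (Nat.le_floor (h i))]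
  ring

lemma pt_congr {a b : Λ.Mor} (hab : a = b) {t u : Fin k → ℝ} (htu : t = u)
    (ht : ∀ i, 0 ≤ t i ∧ t i ≤ (Λ.deg a i : ℝ)) (hu : ∀ i, 0 ≤ u i ∧ u i ≤ (Λ.deg b i : ℝ)) :
    Λ.pt a t ht = Λ.pt b u hu := by
  subst hab htu; rfl

lemma pt_eq_pt_seg {a : Λ.Mor} {m n : Fin k → ℕ} (hna : n ≤ Λ.deg a) {t : Fin k → ℝ}
    (ht : ∀ i, 0 ≤ t i ∧ t i ≤ (Λ.deg a i : ℝ)) (hmt : ∀ i, (m i : ℝ) ≤ t i)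
    (htn : ∀ i, t i ≤ n i) :
    ∃ h, Λ.pt a t ht = Λ.pt (Λ.seg a m n) (fun i => t i - m i) h := by
  have hmn : m ≤ n := fun i => by exact_mod_cast (hmt i).trans (htn i)
  refine ⟨fun i => ⟨sub_nonneg.2 (hmt i), ?_⟩, Quotient.sound ⟨?_, (frac_sub_natCast hmt).symm⟩⟩
  · rw [deg_seg hmn hna, Pi.sub_apply, Nat.cast_sub (hmn i)]
    linarith [htn i]
  · show Λ.seg a (fl t) (ce t) = Λ.seg (Λ.seg a m n) (fl _) (ce _)
    rw [fl_sub_natCast, ce_sub_natCast, seg_seg (le_fl hmt) (fl_le_ce t) (ce_le htn) hna]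

lemma deg_seg_fl_ce {a : Λ.Mor} {t : Fin k → ℝ} (ht : ∀ i, 0 ≤ t i ∧ t i ≤ (Λ.deg a i : ℝ)) :
    Λ.deg (Λ.seg a (fl t) (ce t)) = ce t - fl t :=
  deg_seg (fl_le_ce t) (ce_le fun i => (ht i).2)

lemma deg_seg_fl_ce_le_one {a : Λ.Mor} {t : Fin k → ℝ}
    (ht : ∀ i, 0 ≤ t i ∧ t i ≤ (Λ.deg a i : ℝ)) : Λ.deg (Λ.seg a (fl t) (ce t)) ≤ 1 := by
  intro i
  rw [deg_seg_fl_ce ht, Pi.sub_apply, fl_apply, ce_apply, Pi.one_apply]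
  exact tsub_le_iff_left.2 (Nat.ceil_le_floor_add_one (t i))

lemma pt_mem_Qcube_seg_fl_ce (a : Λ.Mor) (t : Fin k → ℝ)
    (ht : ∀ i, 0 ≤ t i ∧ t i ≤ (Λ.deg a i : ℝ)) :
    Λ.pt a t ht ∈ Λ.Qcube (Λ.seg a (fl t) (ce t)) := by
  obtain ⟨h, e⟩ := pt_eq_pt_seg (ce_le fun i => (ht i).2) ht
    (natCast_fl_le fun i => (ht i).1) (le_natCast_ce t)
  refine ⟨frac t, h, fun i hi => ⟨?_, ?_⟩, e⟩
  · rw [deg_seg_fl_ce ht, Pi.sub_apply, fl_apply, ce_apply] at hi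
    rw [frac_apply, sub_pos]
    by_contra! hle
    have := Nat.ceil_le.2 hle
    omega
  · rw [frac_apply, sub_lt_iff_lt_add']
    exact Nat.lt_floor_add_one (t i)

lemma monotone_skel' : Monotone (skel' Λ) :=
  monotone_nat_of_le_succ fun _ => Set.subset_union_left

lemma Qcube_subset_skel' {b : Λ.Mor} (hb : Λ.deg b ≤ 1) :
    Λ.Qcube b ⊆ skel' Λ (∑ i, Λ.deg b i) := by
  cases h : ∑ i, Λ.deg b i with
  | zero =>
    have hb0 : Λ.deg b = 0 := funext fun i => Finset.sum_eq_zero_iff.1 h i (Finset.mem_univ i)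
    exact Set.subset_biUnion_of_mem (u := Λ.Qcube) hb0
  | succ r =>
    exact Set.subset_union_of_subset_right (Set.subset_biUnion_of_mem (u := Λ.Qcube)
      (show b ∈ {lam | Λ.deg lam ≤ 1 ∧ ∑ i, Λ.deg lam i = r + 1} from ⟨hb, h⟩)) _

lemma skel_eq_univ : Λ.skel k = Set.univ := by
  refine Set.eq_univ_of_forall fun x => ?_
  obtain ⟨⟨a, t, ht⟩, rfl⟩ := Quotient.exists_rep x
  have hb := deg_seg_fl_ce_le_one ht
  have hsum : ∑ i, Λ.deg (Λ.seg a (fl t) (ce t)) i ≤ k :=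
    (Finset.sum_le_sum fun i _ => hb i).trans (by simp)
  exact monotone_skel' hsum (Qcube_subset_skel' hb (pt_mem_Qcube_seg_fl_ce a t ht))

lemma isOpen_iff_isOpen_preimage_skel (U : Set Λ.Real) :
    IsOpen U ↔ ∀ r ≤ k, IsOpen (Subtype.val ⁻¹' U : Set ↥(Λ.skel r)) := by
  refine ⟨fun hU _ _ => hU.preimage continuous_subtype_val, fun h => ?_⟩
  have hU := h k le_rfl
  rw [skel_eq_univ] at hU
  simpa using isOpen_univ.inter_preimage_val_iff.1 hU

def closedCube (lam : Λ.Mor) : Set Λ.Real :=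
  { x | ∃ (t : Fin k → ℝ) (h : ∀ i, 0 ≤ t i ∧ t i ≤ (Λ.deg lam i : ℝ)), x = Λ.pt lam t h }

lemma Qcube_subset_closedCube (lam : Λ.Mor) : Λ.Qcube lam ⊆ Λ.closedCube lam := by
  rintro _ ⟨t, ht, -, rfl⟩
  exact ⟨t, ht, rfl⟩

lemma closedCube_subset_closure_Qcube (lam : Λ.Mor) :
    Λ.closedCube lam ⊆ closure (Λ.Qcube lam) := by
  rintro _ ⟨t, ht, rfl⟩
  let g : { s : Fin k → ℝ // ∀ i, 0 ≤ s i ∧ s i ≤ (Λ.deg lam i : ℝ) } → Λ.Real :=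
    fun s => Quotient.mk _ ⟨lam, s⟩
  have hg : Continuous g := continuous_quot_mk.comp continuous_sigmaMk
  have ht_mem : (⟨t, ht⟩ : { s : Fin k → ℝ // ∀ i, 0 ≤ s i ∧ s i ≤ (Λ.deg lam i : ℝ) }) ∈
      closure {s | ∀ i, Λ.deg lam i = 1 → 0 < s.1 i ∧ s.1 i < 1} := by
    rw [closure_subtype]
    refine closure_mono ?_ (mem_closure_openFace ht)
    intro u hu
    exact ⟨⟨u, fun i => (hu i).1⟩, fun i => (hu i).2, rfl⟩
  refine closure_mono ?_ (image_closure_subset_closure_image hg ⟨_, ht_mem, rfl⟩)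
  rintro _ ⟨s, hs, rfl⟩
  exact ⟨s.1, s.2, hs, rfl⟩

def commonSegments (lam a : Λ.Mor) : Set ((Fin k → ℕ) × (Fin k → ℕ)) :=
  { mn | mn.1 ≤ mn.2 ∧ mn.2 ≤ Λ.deg a ∧
      ∃ p q, p ≤ q ∧ q ≤ Λ.deg lam ∧ Λ.seg a mn.1 mn.2 = Λ.seg lam p q }

lemma finite_commonSegments (lam a : Λ.Mor) : (Λ.commonSegments lam a).Finite :=
  ((Set.finite_Iic _).prod (Set.finite_Iic _)).subset
    fun _ ⟨hmn, hna, _⟩ => ⟨hmn.trans hna, hna⟩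

lemma pt_mem_closedCube_iff (lam a : Λ.Mor) (t : Fin k → ℝ)
    (ht : ∀ i, 0 ≤ t i ∧ t i ≤ (Λ.deg a i : ℝ)) :
    Λ.pt a t ht ∈ Λ.closedCube lam ↔
      t ∈ ⋃ mn ∈ Λ.commonSegments lam a,
        Set.Icc (fun i => (mn.1 i : ℝ)) (fun i => (mn.2 i : ℝ)) := by
  simp only [Set.mem_iUnion, Set.mem_Icc, exists_prop, Pi.le_def]
  constructor
  · rintro ⟨s, hs, e⟩
    obtain ⟨hseg, -⟩ := Quotient.exact e
    exact ⟨(fl t, ce t), ⟨fl_le_ce t, ce_le fun i => (ht i).2, fl s, ce s, fl_le_ce s,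
      ce_le fun i => (hs i).2, hseg⟩, natCast_fl_le (fun i => (ht i).1), le_natCast_ce t⟩
  · rintro ⟨⟨m, n⟩, ⟨hmn, hna, p, q, hpq, hql, hseg⟩, htm, htn⟩
    obtain ⟨h, e⟩ := pt_eq_pt_seg hna ht htm htn
    have hdeg : Λ.deg (Λ.seg a m n) = q - p := by rw [hseg, deg_seg hpq hql]
    set s : Fin k → ℝ := fun i => p i + (t i - m i)
    have hsq : ∀ i, s i ≤ q i := fun i => by
      have := (h i).2
      rw [hdeg, Pi.sub_apply, Nat.cast_sub (hpq i)] at this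
      simp only [s]
      linarith
    have hs : ∀ i, 0 ≤ s i ∧ s i ≤ (Λ.deg lam i : ℝ) := fun i =>
      ⟨add_nonneg (Nat.cast_nonneg _) (h i).1, (hsq i).trans (by exact_mod_cast hql i)⟩
    obtain ⟨h', e'⟩ := pt_eq_pt_seg hql hs (fun i => le_add_of_nonneg_right (h i).1) hsq
    refine ⟨s, hs, ?_⟩
    calc Λ.pt a t ht = Λ.pt (Λ.seg a m n) (fun i => t i - m i) h := e
      _ = Λ.pt (Λ.seg lam p q) (fun i => s i - p i) h' :=
        pt_congr hseg (funext fun i => by simp only [s]; ring) _ _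
      _ = Λ.pt lam s hs := e'.symm

lemma isClosed_closedCube (lam : Λ.Mor) : IsClosed (Λ.closedCube lam) := by
  have hquot : Topology.IsQuotientMap (Quotient.mk Λ.ptSetoid : Λ.Points → Λ.Real) :=
    isQuotientMap_quot_mk
  refine hquot.isClosed_preimage.1 (isClosed_sigma_iff.2 fun a => ?_)
  have hfaces : IsClosed
      (((↑) : { t : Fin k → ℝ // ∀ i, 0 ≤ t i ∧ t i ≤ (Λ.deg a i : ℝ) } → _) ⁻¹'
        ⋃ mn ∈ Λ.commonSegments lam a, Set.Icc (fun i => (mn.1 i : ℝ)) (fun i => (mn.2 i : ℝ))) :=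
    ((finite_commonSegments lam a).isClosed_biUnion fun _ _ => isClosed_Icc).preimage
      continuous_subtype_val
  convert hfaces using 1
  exact Set.ext fun s => pt_mem_closedCube_iff lam a s.1 s.2

lemma closure_Qcube (lam : Λ.Mor) : closure (Λ.Qcube lam) = Λ.closedCube lam :=
  (closure_minimal (Qcube_subset_closedCube lam) (isClosed_closedCube lam)).antisymm
    (closedCube_subset_closure_Qcube lam)

end KGraph

/-- For each `λ` with `d(λ) ≤ 1_k`, the closure of the open
cube `Q_λ` in `X_Λ` is `{[λ,t] : 0 ≤ t ≤ d(λ)}`; and a set `U ⊆ X_Λ` is open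
iff `U ∩ X_Λ^r` is relatively open in the skeleton `X_Λ^r` for each `r ≤ k`. -/
theorem closure_of_cube_and_weak_topology (k : ℕ) (Λ : KGraph k) :
    (∀ lam : Λ.Mor, Λ.deg lam ≤ 1 →
      closure (Λ.Qcube lam) =
        { x : Λ.Real | ∃ (t : Fin k → ℝ)
            (h : ∀ i, 0 ≤ t i ∧ t i ≤ (Λ.deg lam i : ℝ)), x = Λ.pt lam t h }) ∧
    (∀ U : Set Λ.Real, IsOpen U ↔
      ∀ r ≤ k, IsOpen (Subtype.val ⁻¹' U : Set ↥(Λ.skel r))) :=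
  ⟨fun lam _ => KGraph.closure_Qcube lam, KGraph.isOpen_iff_isOpen_preimage_skel⟩
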